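/- The subset Ω = {(x,y,z) ∈ ℝ³ : x² + y² + z² = 1, xyz < 0} of the unit sphere has exactly four connected components. -/

import Mathlib

/-!
No coordinate vanishes on `Ω`, so the signs of the coordinates are locally constant there, and
since `xyz < 0` they are determined by the signs of `x` and `y`: this gives four patterns, each
attained. Two points with the same pattern lie in the intersection of the sphere with one open
orthant, which is connected as the radial projection of a convex set.
-/

open Set Metric

section ConnectedComponents

variable {α β : Type*} [TopologicalSpace α] [TopologicalSpace β] [TotallyDisconnectedSpace β]

theorem Continuous.bijective_connectedComponentsLift {f : α → β} (hf : Continuous f)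
    (hsurj : Function.Surjective f) (hfib : ∀ x y, f x = f y → x ∈ connectedComponent y) :
    Function.Bijective hf.connectedComponentsLift := by
  refine ⟨fun x y hxy => ?_, fun b => ?_⟩
  · obtain ⟨x, rfl⟩ := ConnectedComponents.surjective_coe x
    obtain ⟨y, rfl⟩ := ConnectedComponents.surjective_coe y
    exact ConnectedComponents.coe_eq_coe'.2 (hfib x y hxy)
  · obtain ⟨x, rfl⟩ := hsurj b
    exact ⟨x, rfl⟩

theorem mem_connectedComponent_of_isPreconnected {s S : Set α} (hS : IsPreconnected S)
    (hSs : S ⊆ s) {x y : s} (hx : x.1 ∈ S) (hy : y.1 ∈ S) : x ∈ connectedComponent y := by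
  have := hS.subset_connectedComponentIn hy hSs hx
  rw [connectedComponentIn_eq_image y.2] at this
  obtain ⟨z, hz, hzx⟩ := this
  rwa [← Subtype.ext hzx]

end ConnectedComponents

theorem isClopen_setOf_neg_of_ne_zero {X : Type*} [TopologicalSpace X] {f : X → ℝ}
    (hf : Continuous f) (hf0 : ∀ x, f x ≠ 0) : IsClopen {x | f x < 0} := by
  refine ⟨?_, isOpen_lt hf continuous_const⟩
  have : {x | f x < 0} = {x | 0 < f x}ᶜ := by
    ext x
    show f x < 0 ↔ ¬0 < f x
    rw [not_lt]
    exact (hf0 x).le_iff_lt.symm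
  rw [this]
  exact (isOpen_lt continuous_const hf).isClosed_compl

theorem Convex.isConnected_inter_sphere {E : Type*} [NormedAddCommGroup E] [NormedSpace ℝ E]
    {C : Set E} (hC : Convex ℝ C) (hCne : C.Nonempty) (h0 : (0 : E) ∉ C)
    (hcone : ∀ x ∈ C, ∀ t : ℝ, 0 < t → t • x ∈ C) {r : ℝ} (hr : 0 < r) :
    IsConnected (C ∩ sphere 0 r) := by
  have hne : ∀ x ∈ C, x ≠ 0 := fun x hx h => h0 (h ▸ hx)
  have himage : (fun x : E => (r * ‖x‖⁻¹) • x) '' C = C ∩ sphere 0 r := by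
    ext y
    constructor
    · rintro ⟨x, hx, rfl⟩
      have hx0 : 0 < ‖x‖ := norm_pos_iff.2 (hne x hx)
      refine ⟨hcone x hx _ (by positivity), ?_⟩
      rw [mem_sphere_zero_iff_norm, norm_smul, Real.norm_of_nonneg (by positivity)]
      field_simp
    · rintro ⟨hy, hyr⟩
      rw [mem_sphere_zero_iff_norm] at hyr
      refine ⟨y, hy, ?_⟩
      simp [hyr, hr.ne']
  rw [← himage]
  refine (hC.isConnected hCne).image _ (ContinuousOn.smul ?_ continuousOn_id)
  exact continuousOn_const.mul
    (continuous_norm.continuousOn.inv₀ fun x hx => norm_ne_zero_iff.2 (hne x hx))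

section Orthant

variable {ι : Type*}

def openOrthant (q : EuclideanSpace ℝ ι) : Set (EuclideanSpace ℝ ι) :=
  {p | ∀ i, 0 < q i * p i}

theorem convex_openOrthant (q : EuclideanSpace ℝ ι) : Convex ℝ (openOrthant q) := by
  have : openOrthant q = ⋂ i, {p : EuclideanSpace ℝ ι | 0 < q i * p i} := by
    ext p; simp [openOrthant]
  rw [this]
  refine convex_iInter fun i => convex_halfSpace_gt ?_ 0
  exact ⟨fun a b => by simp [mul_add], fun c a => by simp; ring⟩

theorem smul_mem_openOrthant {q p : EuclideanSpace ℝ ι} (hp : p ∈ openOrthant q) {t : ℝ}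
    (ht : 0 < t) : t • p ∈ openOrthant q := fun i => by
  simpa [mul_left_comm] using mul_pos ht (hp i)

theorem zero_notMem_openOrthant [Nonempty ι] (q : EuclideanSpace ℝ ι) :
    (0 : EuclideanSpace ℝ ι) ∉ openOrthant q := fun h => by
  simpa using h (Classical.arbitrary ι)

theorem self_mem_openOrthant {q : EuclideanSpace ℝ ι} (hq : ∀ i, q i ≠ 0) :
    q ∈ openOrthant q := fun i => mul_self_pos.2 (hq i)

theorem isConnected_openOrthant_inter_sphere [Fintype ι] [Nonempty ι] {q : EuclideanSpace ℝ ι}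
    (hq : ∀ i, q i ≠ 0) : IsConnected (openOrthant q ∩ sphere 0 1) :=
  (convex_openOrthant q).isConnected_inter_sphere ⟨q, self_mem_openOrthant hq⟩
    (zero_notMem_openOrthant q) (fun _ hp _ ht => smul_mem_openOrthant hp ht) one_pos

end Orthant

def Ω : Set (EuclideanSpace ℝ (Fin 3)) :=
  {p | (p 0) ^ 2 + (p 1) ^ 2 + (p 2) ^ 2 = 1 ∧ p 0 * p 1 * p 2 < 0}

theorem mem_sphere_iff_sum_sq (p : EuclideanSpace ℝ (Fin 3)) :
    p ∈ sphere 0 1 ↔ (p 0) ^ 2 + (p 1) ^ 2 + (p 2) ^ 2 = 1 := by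
  rw [mem_sphere_zero_iff_norm, ← pow_eq_one_iff_of_nonneg (norm_nonneg p) two_ne_zero,
    EuclideanSpace.real_norm_sq_eq, Fin.sum_univ_three]

theorem coord_ne_zero_of_mem_Ω {p : EuclideanSpace ℝ (Fin 3)} (hp : p ∈ Ω) (i : Fin 3) :
    p i ≠ 0 := by
  obtain ⟨-, hprod⟩ := hp
  intro h
  fin_cases i <;> simp_all

theorem openOrthant_inter_sphere_subset {q : EuclideanSpace ℝ (Fin 3)} (hq : q ∈ Ω) :
    openOrthant q ∩ sphere 0 1 ⊆ Ω := by
  rintro p ⟨hpq, hp⟩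
  refine ⟨(mem_sphere_iff_sum_sq p).1 hp, ?_⟩
  have := mul_pos (mul_pos (hpq 0) (hpq 1)) (hpq 2)
  nlinarith [hq.2]

theorem mem_openOrthant_of_signs {q p : EuclideanSpace ℝ (Fin 3)} (hq : q ∈ Ω) (hp : p ∈ Ω)
    (h0 : 0 < q 0 * p 0) (h1 : 0 < q 1 * p 1) : p ∈ openOrthant q := by
  have h2 : 0 < q 2 * p 2 := by nlinarith [mul_pos h0 h1, mul_pos_of_neg_of_neg hq.2 hp.2]
  intro i
  fin_cases i <;> assumption

noncomputable def signPattern (p : Ω) : Bool × Bool :=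
  (decide (p.1 0 < 0), decide (p.1 1 < 0))

theorem continuous_signPattern : Continuous signPattern := by
  have hsign (i : Fin 3) : Continuous fun p : Ω => decide (p.1 i < 0) :=
    (continuous_boolIndicator_iff_isClopen _).2 <| isClopen_setOf_neg_of_ne_zero
      ((EuclideanSpace.proj i).continuous.comp continuous_subtype_val)
      fun p => coord_ne_zero_of_mem_Ω p.2 i
  exact (hsign 0).prodMk (hsign 1)

theorem mul_pos_of_neg_iff_neg {a b : ℝ} (ha : a ≠ 0) (hb : b ≠ 0) (h : a < 0 ↔ b < 0) :
    0 < a * b := by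
  rcases ha.lt_or_gt with ha | ha
  · exact mul_pos_of_neg_of_neg ha (h.1 ha)
  · exact mul_pos ha (hb.lt_or_gt.resolve_left fun hb => ha.not_gt (h.2 hb))

theorem mem_connectedComponent_of_signPattern_eq {p q : Ω} (h : signPattern p = signPattern q) :
    p ∈ connectedComponent q := by
  simp only [signPattern, Prod.mk.injEq, decide_eq_decide] at h
  have hp := coord_ne_zero_of_mem_Ω p.2
  have hq := coord_ne_zero_of_mem_Ω q.2
  have hpq : p.1 ∈ openOrthant q.1 := mem_openOrthant_of_signs q.2 p.2
    (mul_pos_of_neg_iff_neg (hq 0) (hp 0) h.1.symm)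
    (mul_pos_of_neg_iff_neg (hq 1) (hp 1) h.2.symm)
  exact mem_connectedComponent_of_isPreconnected
    (isConnected_openOrthant_inter_sphere hq).isPreconnected
    (openOrthant_inter_sphere_subset q.2)
    ⟨hpq, (mem_sphere_iff_sum_sq _).2 p.2.1⟩
    ⟨self_mem_openOrthant hq, (mem_sphere_iff_sum_sq _).2 q.2.1⟩

theorem signPattern_surjective : Function.Surjective signPattern := by
  rintro ⟨_ | _, _ | _⟩
  · refine ⟨⟨!₂[2 / 3, 2 / 3, -1 / 3], ?_⟩, ?_⟩ <;>
      norm_num [Ω, signPattern, Matrix.cons_val_two]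
  · refine ⟨⟨!₂[2 / 3, -2 / 3, 1 / 3], ?_⟩, ?_⟩ <;>
      norm_num [Ω, signPattern, Matrix.cons_val_two]
  · refine ⟨⟨!₂[-2 / 3, 2 / 3, 1 / 3], ?_⟩, ?_⟩ <;>
      norm_num [Ω, signPattern, Matrix.cons_val_two]
  · refine ⟨⟨!₂[-2 / 3, -2 / 3, -1 / 3], ?_⟩, ?_⟩ <;>
      norm_num [Ω, signPattern, Matrix.cons_val_two]

/-- **topology in Example `plik_8_4`.** The subset
`Ω = {(x,y,z) : x² + y² + z² = 1, xyz < 0}` of the unit sphere has exactly four connected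
components. -/
theorem statement15 :
    Nat.card (ConnectedComponents
      ↥{p : EuclideanSpace ℝ (Fin 3) |
        (p 0) ^ 2 + (p 1) ^ 2 + (p 2) ^ 2 = 1 ∧ p 0 * p 1 * p 2 < 0}) = 4 := by
  change Nat.card (ConnectedComponents Ω) = 4
  rw [Nat.card_eq_of_bijective _ (continuous_signPattern.bijective_connectedComponentsLift
    signPattern_surjective fun _ _ => mem_connectedComponent_of_signPattern_eq)]
  simp
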